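/- The no-mixed-state assumption cannot be dropped for reception-error-freeness preservation: there exist two communicating systems S_1 and S_2 over disjoint participant sets, a set of interfaces H = {h_1, h_2} for {S_1, S_2} (whose interface CFSMs contain mixed states), a connection model CM for H, and a connection policy K for H complying with CM, such that S_1, S_2 and K are all reception-error free, but the multicomposition MC({S_1, S_2}, K) has a reachable unspecified reception configuration and hence is not reception-error free. -/

import Mathlib

namespace CFSM

/-- Direction of a communication action: output (`!`) or input (`?`). -/
inductive Dir : Type where
  | out : Dir
  | inp : Dir
deriving DecidableEq

instance : Fintype Dir :=
  ⟨{Dir.out, Dir.inp}, fun x => by cases x <;> simp⟩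

/-- An action `pq!a` (output) or `pq?a` (input) over participants `P` and messages `A`:
`snd` is the sender `p`, `rcv` the receiver `q`, `msg` the message `a`. -/
structure Act (P : Type) (A : Type) : Type where
  snd : P
  rcv : P
  dir : Dir
  msg : A

instance {P A : Type} [Finite P] [Finite A] : Finite (Act P A) :=
  Finite.of_injective (fun l => (l.snd, l.rcv, l.dir, l.msg))
    (fun a b h => by
      cases a; cases b
      simp only [Prod.mk.injEq] at h
      obtain ⟨h1, h2, h3, h4⟩ := h
      subst h1; subst h2; subst h3; subst h4; rfl)

/-- The subject of an action: the sender of an output, the receiver of an input. -/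
def Act.subject {P A : Type} (l : Act P A) : P :=
  match l.dir with
  | .out => l.snd
  | .inp => l.rcv

/-- A communicating system over participants `P` and messages `A`:
one machine (state type, initial state and transition relation) per participant. -/
structure CS (P : Type) (A : Type) : Type 1 where
  St : P → Type
  init : ∀ p, St p
  delta : ∀ p, Set (St p × Act P A × St p)

/-- All actions of the machine of participant `p` have subject `p`
(the name of the machine) and distinct endpoints. -/
def CS.WellFormed {P A : Type} (S : CS P A) : Prop :=
  ∀ p t, t ∈ S.delta p → ((t.2.1 : Act P A).subject = p ∧ t.2.1.snd ≠ t.2.1.rcv)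

/-- A configuration: a local state for each machine and a FIFO buffer
for each ordered pair of participants. -/
structure Config {P A : Type} (S : CS P A) : Type where
  st : ∀ p, S.St p
  ch : P → P → List A

/-- The initial configuration: all machines in their initial state, all channels empty. -/
def CS.initConfig {P A : Type} (S : CS P A) : Config S :=
  ⟨S.init, fun _ _ => []⟩

/-- The labelled transition relation between configurations. -/
def StepL {P A : Type} (S : CS P A) (c : Config S) (l : Act P A) (c' : Config S) : Prop :=
  match l.dir with
  | .out =>
      (c.st l.snd, l, c'.st l.snd) ∈ S.delta l.snd ∧
      (∀ p, p ≠ l.snd → c'.st p = c.st p) ∧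
      c'.ch l.snd l.rcv = c.ch l.snd l.rcv ++ [l.msg] ∧
      (∀ p q, (p, q) ≠ (l.snd, l.rcv) → c'.ch p q = c.ch p q)
  | .inp =>
      (c.st l.rcv, l, c'.st l.rcv) ∈ S.delta l.rcv ∧
      (∀ p, p ≠ l.rcv → c'.st p = c.st p) ∧
      c.ch l.snd l.rcv = l.msg :: c'.ch l.snd l.rcv ∧
      (∀ p q, (p, q) ≠ (l.snd, l.rcv) → c'.ch p q = c.ch p q)

/-- Unlabelled transition relation. -/
def Step {P A : Type} (S : CS P A) (c c' : Config S) : Prop :=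
  ∃ l, StepL S c l c'

/-- Reachability between configurations. -/
def Reach {P A : Type} (S : CS P A) : Config S → Config S → Prop :=
  Relation.ReflTransGen (Step S)

/-- The set of configurations reachable from the initial configuration. -/
def RC {P A : Type} (S : CS P A) : Set (Config S) :=
  {c | Reach S S.initConfig c}

/-- A local state is final if it has no outgoing transition. -/
def FinalSt {Q P A : Type} (δ : Set (Q × Act P A × Q)) (q : Q) : Prop :=
  ∀ l q', (q, l, q') ∉ δ

/-- A local state is receiving if it is not final and all its outgoing
transitions are labelled with input actions. -/
def ReceivingSt {Q P A : Type} (δ : Set (Q × Act P A × Q)) (q : Q) : Prop :=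
  (∃ l q', (q, l, q') ∈ δ) ∧ ∀ l q', (q, l, q') ∈ δ → (l : Act P A).dir = Dir.inp

/-- A local state is mixed if it has at least one outgoing output-labelled
transition and at least one outgoing input-labelled transition. -/
def MixedSt {Q P A : Type} (δ : Set (Q × Act P A × Q)) (q : Q) : Prop :=
  (∃ l q', (q, l, q') ∈ δ ∧ (l : Act P A).dir = Dir.out) ∧
  (∃ l q', (q, l, q') ∈ δ ∧ (l : Act P A).dir = Dir.inp)

/-- A machine has no mixed states. -/
def NoMixed {Q P A : Type} (δ : Set (Q × Act P A × Q)) : Prop :=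
  ∀ q, ¬ MixedSt δ q

/-- Deadlock configuration: all channels empty but all machines in receiving states. -/
def DeadlockConfig {P A : Type} (S : CS P A) (c : Config S) : Prop :=
  (∀ p q, c.ch p q = []) ∧ ∀ p, ReceivingSt (S.delta p) (c.st p)

def DeadlockFree {P A : Type} (S : CS P A) : Prop :=
  ∀ c ∈ RC S, ¬ DeadlockConfig S c

/-- Orphan-message configuration: all machines final but some channel nonempty. -/
def OrphanConfig {P A : Type} (S : CS P A) (c : Config S) : Prop :=
  (∀ p, FinalSt (S.delta p) (c.st p)) ∧ ∃ p q, c.ch p q ≠ []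

def OrphanFree {P A : Type} (S : CS P A) : Prop :=
  ∀ c ∈ RC S, ¬ OrphanConfig S c

/-- Unspecified reception configuration: some machine `r` is in a receiving state and,
for every input transition of `r`, the corresponding channel is nonempty with a
first element different from the expected message. -/
def URConfig {P A : Type} (S : CS P A) (c : Config S) : Prop :=
  ∃ r, ReceivingSt (S.delta r) (c.st r) ∧
    ∀ s a q', (c.st r, Act.mk s r Dir.inp a, q') ∈ S.delta r →
      (c.ch s r ≠ [] ∧ ¬ ∃ w, c.ch s r = a :: w)

def ReceptionErrorFree {P A : Type} (S : CS P A) : Prop :=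
  ∀ c ∈ RC S, ¬ URConfig S c

/-- Progress: every reachable configuration has an outgoing transition or all
machines are in final states. -/
def ProgressProp {P A : Type} (S : CS P A) : Prop :=
  ∀ c ∈ RC S, (∃ c', Step S c c') ∨ ∀ p, FinalSt (S.delta p) (c.st p)

/-- `p`-lock configuration: `p` is in a receiving state and never occurs as the
subject of an action in any transition sequence from `c`. -/
def PLockConfig {P A : Type} (S : CS P A) (c : Config S) (p : P) : Prop :=
  ReceivingSt (S.delta p) (c.st p) ∧
  ∀ c1 l c2, Reach S c c1 → StepL S c1 l c2 → l.subject ≠ p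

def LockFree {P A : Type} (S : CS P A) : Prop :=
  ∀ c ∈ RC S, ∀ p, ¬ PLockConfig S c p

section Composition

variable {I : Type} {P : I → Type} {A : Type}

/-- Messages occurring in input actions of the machine of `p`. -/
def inMsgs {Pp A : Type} (S : CS Pp A) (p : Pp) : Set A :=
  {a | ∃ q s q', (q, Act.mk s p Dir.inp a, q') ∈ S.delta p}

/-- Messages occurring in output actions of the machine of `p`. -/
def outMsgs {Pp A : Type} (S : CS Pp A) (p : Pp) : Set A :=
  {a | ∃ q r q', (q, Act.mk p r Dir.out a, q') ∈ S.delta p}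

/-- `CM` is a connection model for the interfaces `hh i` of the family `S`
(the interface `h_i` is represented by its index `i`). -/
def IsConnModel (S : ∀ i, CS (P i) A) (hh : ∀ i, P i) (CM : Set (I × A × I)) : Prop :=
  ∀ i a,
    (a ∈ inMsgs (S i) (hh i) →
      ∃ j, j ≠ i ∧ a ∈ outMsgs (S j) (hh j) ∧ (i, a, j) ∈ CM) ∧
    (a ∈ outMsgs (S i) (hh i) →
      ∃ j, j ≠ i ∧ a ∈ inMsgs (S j) (hh j) ∧ (j, a, i) ∈ CM)

/-- `CM` is a strong connection model: additionally the connecting partner is unique. -/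
def IsStrongConnModel (S : ∀ i, CS (P i) A) (hh : ∀ i, P i) (CM : Set (I × A × I)) : Prop :=
  IsConnModel S hh CM ∧
  ∀ i a,
    (a ∈ inMsgs (S i) (hh i) → ∃! j, (i, a, j) ∈ CM) ∧
    (a ∈ outMsgs (S i) (hh i) → ∃! j, (j, a, i) ∈ CM)

/-- Conditions (*) and (**) for a candidate transition relation `d` of the local
connection policy of interface `hh i` (the name `k_i` is represented by `i`). -/
def PolicySat (S : ∀ i, CS (P i) A) (hh : ∀ i, P i) (CM : Set (I × A × I)) (i : I)
    (d : Set ((S i).St (hh i) × Act I A × (S i).St (hh i))) : Prop :=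
  (∀ q r a q', (q, Act.mk r (hh i) Dir.inp a, q') ∈ (S i).delta (hh i) →
      ∃ j, j ≠ i ∧ (i, a, j) ∈ CM ∧ (q, Act.mk i j Dir.out a, q') ∈ d) ∧
  (∀ q r a q', (q, Act.mk (hh i) r Dir.out a, q') ∈ (S i).delta (hh i) →
      ∃ j, j ≠ i ∧ (j, a, i) ∈ CM ∧ (q, Act.mk j i Dir.inp a, q') ∈ d)

/-- `d` belongs to the local connection policy set `IS(M_{h_i}, CM)`:
it is a minimal relation satisfying (*) and (**).  (The states `q̇` of the
policy machine are identified with the states `q` of `M_{h_i}`.) -/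
def InIS (S : ∀ i, CS (P i) A) (hh : ∀ i, P i) (CM : Set (I × A × I)) (i : I)
    (d : Set ((S i).St (hh i) × Act I A × (S i).St (hh i))) : Prop :=
  PolicySat S hh CM i d ∧ ∀ d', d' ⊆ d → PolicySat S hh CM i d' → d' = d

/-- The communicating system (over the participant type `I` of names `k_i`)
determined by the family of transition relations `Kd` of a connection policy. -/
def policyCS (S : ∀ i, CS (P i) A) (hh : ∀ i, P i)
    (Kd : ∀ i, Set ((S i).St (hh i) × Act I A × (S i).St (hh i))) : CS I A where
  St := fun i => (S i).St (hh i)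
  init := fun i => (S i).init (hh i)
  delta := Kd

/-- `Kd` is a connection policy for the interfaces `hh` complying with `CM`. -/
def IsConnPolicy (S : ∀ i, CS (P i) A) (hh : ∀ i, P i) (CM : Set (I × A × I))
    (Kd : ∀ i, Set ((S i).St (hh i) × Act I A × (S i).St (hh i))) : Prop :=
  ∀ i, InIS S hh CM i (Kd i)

/-- States of the gateway for interface `hh i`: the original states plus one
fresh state per transition of `M_{h_i}`. -/
abbrev GWState (S : ∀ i, CS (P i) A) (hh : ∀ i, P i) (i : I) : Type :=
  (S i).St (hh i) ⊕ ((S i).St (hh i) × Act (P i) A × (S i).St (hh i))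

/-- Lifting of a local action of system `i` to the composed participant type. -/
def liftAct (i : I) (l : Act (P i) A) : Act ((j : I) × P j) A :=
  Act.mk ⟨i, l.snd⟩ ⟨i, l.rcv⟩ l.dir l.msg

/-- Transition relation of the gateway `M_{h_i} ⟲ M_{k_i}`. -/
def GWdelta (S : ∀ i, CS (P i) A) (hh : ∀ i, P i)
    (Kd : ∀ i, Set ((S i).St (hh i) × Act I A × (S i).St (hh i))) (i : I) :
    Set (GWState S hh i × Act ((j : I) × P j) A × GWState S hh i) :=
  {x | ∃ q a q',
    (∃ s r, (q, Act.mk (hh i) s Dir.out a, q') ∈ (S i).delta (hh i) ∧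
        (q, Act.mk r i Dir.inp a, q') ∈ Kd i ∧
        (x = (Sum.inl q, Act.mk ⟨r, hh r⟩ ⟨i, hh i⟩ Dir.inp a,
              Sum.inr (q, Act.mk (hh i) s Dir.out a, q')) ∨
         x = (Sum.inr (q, Act.mk (hh i) s Dir.out a, q'),
              Act.mk ⟨i, hh i⟩ ⟨i, s⟩ Dir.out a, Sum.inl q'))) ∨
    (∃ s r, (q, Act.mk s (hh i) Dir.inp a, q') ∈ (S i).delta (hh i) ∧
        (q, Act.mk i r Dir.out a, q') ∈ Kd i ∧
        (x = (Sum.inl q, Act.mk ⟨i, s⟩ ⟨i, hh i⟩ Dir.inp a,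
              Sum.inr (q, Act.mk s (hh i) Dir.inp a, q')) ∨
         x = (Sum.inr (q, Act.mk s (hh i) Dir.inp a, q'),
              Act.mk ⟨i, hh i⟩ ⟨r, hh r⟩ Dir.out a, Sum.inl q')))}

open Classical in
/-- State type of the machine of participant `⟨i, p⟩` in the multicomposition:
the gateway state type if `p` is the interface of system `i`, the original
state type otherwise. -/
noncomputable def MCSt (S : ∀ i, CS (P i) A) (hh : ∀ i, P i) (x : (i : I) × P i) : Type :=
  if x.2 = hh x.1 then GWState S hh x.1 else (S x.1).St x.2

/-- The multicomposition `MC({S_i}, K)`: all machines of the single systems,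
with the machine of each interface `hh i` replaced by its gateway. -/
noncomputable def MC (S : ∀ i, CS (P i) A) (hh : ∀ i, P i)
    (Kd : ∀ i, Set ((S i).St (hh i) × Act I A × (S i).St (hh i))) :
    CS ((i : I) × P i) A where
  St := MCSt S hh
  init := fun x => by
    by_cases hp : x.2 = hh x.1
    · have h : MCSt S hh x = GWState S hh x.1 := by simp [MCSt, hp]
      rw [h]; exact Sum.inl ((S x.1).init (hh x.1))
    · have h : MCSt S hh x = (S x.1).St x.2 := by simp [MCSt, hp]
      rw [h]; exact (S x.1).init x.2
  delta := fun x => by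
    by_cases hp : x.2 = hh x.1
    · have h : MCSt S hh x = GWState S hh x.1 := by simp [MCSt, hp]
      rw [h]; exact GWdelta S hh Kd x.1
    · have h : MCSt S hh x = (S x.1).St x.2 := by simp [MCSt, hp]
      rw [h]
      exact {t | ∃ q l q', (q, l, q') ∈ (S x.1).delta x.2 ∧ t = (q, liftAct x.1 l, q')}

/-- The state of the gateway of interface `hh i` in a configuration of the
multicomposition, as an element of `GWState`. -/
noncomputable def toGW (S : ∀ i, CS (P i) A) (hh : ∀ i, P i) (i : I)
    (x : MCSt S hh ⟨i, hh i⟩) : GWState S hh i :=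
  cast (by simp [MCSt]) x

/-- The state of a non-interface participant in a configuration of the
multicomposition, as an element of its original state type. -/
noncomputable def toLoc (S : ∀ i, CS (P i) A) (hh : ∀ i, P i) {i : I} {p : P i}
    (hp : p ≠ hh i) (x : MCSt S hh ⟨i, p⟩) : (S i).St p :=
  cast (by simp [MCSt, hp]) x

/-- Projection of a configuration of the multicomposition to system `S i`,
assuming the gateway state of `hh i` is not a fresh intermediate state
(i.e. it is of the form `Sum.inl q`). -/
noncomputable def projSys (S : ∀ i, CS (P i) A) (hh : ∀ i, P i)
    (Kd : ∀ i, Set ((S i).St (hh i) × Act I A × (S i).St (hh i)))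
    (i : I) (s : Config (MC S hh Kd))
    (hq : ∃ q, toGW S hh i (s.st ⟨i, hh i⟩) = Sum.inl q) : Config (S i) where
  st := fun p => by
    by_cases hp : p = hh i
    · rw [hp]; exact hq.choose
    · exact toLoc S hh hp (s.st ⟨i, p⟩)
  ch := fun p q => s.ch ⟨i, p⟩ ⟨i, q⟩

/-- Projection of a configuration of the multicomposition to the connection
policy `K`, assuming no gateway is in a fresh intermediate state. -/
noncomputable def projPolicy (S : ∀ i, CS (P i) A) (hh : ∀ i, P i)
    (Kd : ∀ i, Set ((S i).St (hh i) × Act I A × (S i).St (hh i)))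
    (s : Config (MC S hh Kd))
    (hq : ∀ i, ∃ q, toGW S hh i (s.st ⟨i, hh i⟩) = Sum.inl q) :
    Config (policyCS S hh Kd) where
  st := fun i => (hq i).choose
  ch := fun i j => s.ch ⟨i, hh i⟩ ⟨j, hh j⟩

end Composition

end CFSM
namespace CEx
open CFSM

/-! Messages in `Fin 4`:  `0 = a`, `1 = a'`, `2 = b`, `3 = b'`. -/

abbrev Msg := Fin 4

/-- Machine of participant `p` (= `false`) in system `S₁`:  `p0 -(p h₁!a')→ p1 -(h₁ p?b)→ p2`. -/
def dP : Set (Fin 6 × Act Bool Msg × Fin 6) :=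
  {(0, Act.mk false true Dir.out 1, 1), (1, Act.mk true false Dir.inp 2, 2)}

/-- Machine of the interface `h₁` (= `true`) in `S₁`:
mixed state `q0` with `p h₁?a` (to dead state 5) and `h₁ p!b` (to 1), then `p h₁?a'`;
plus an unreachable output `h₁ p!b'` from state 3. -/
def dH1 : Set (Fin 6 × Act Bool Msg × Fin 6) :=
  {(0, Act.mk false true Dir.inp 0, 5), (0, Act.mk true false Dir.out 2, 1),
   (1, Act.mk false true Dir.inp 1, 2), (3, Act.mk true false Dir.out 3, 4)}

/-- Machine of participant `r` (= `false`) in `S₂`:  `!b'` then `?a` then `!b` then `?a'`. -/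
def dR : Set (Fin 6 × Act Bool Msg × Fin 6) :=
  {(0, Act.mk false true Dir.out 3, 1), (1, Act.mk true false Dir.inp 0, 2),
   (2, Act.mk false true Dir.out 2, 3), (3, Act.mk true false Dir.inp 1, 4)}

/-- Machine of the interface `h₂` (= `true`) in `S₂`:
mixed state `u0` with `h₂ r!a` (to 1) and `r h₂?b'` (to 2), diamond to 3,
then `r h₂?b` and `h₂ r!a'`. -/
def dH2 : Set (Fin 6 × Act Bool Msg × Fin 6) :=
  {(0, Act.mk true false Dir.out 0, 1), (0, Act.mk false true Dir.inp 3, 2),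
   (1, Act.mk false true Dir.inp 3, 3), (2, Act.mk true false Dir.out 0, 3),
   (3, Act.mk false true Dir.inp 2, 4), (4, Act.mk true false Dir.out 1, 5)}

abbrev S1 : CS Bool Msg := ⟨fun _ => Fin 6, fun _ => 0, fun p => match p with
  | false => dP | true => dH1⟩

abbrev S2 : CS Bool Msg := ⟨fun _ => Fin 6, fun _ => 0, fun p => match p with
  | false => dR | true => dH2⟩

abbrev Sys : Bool → CS Bool Msg := fun b => match b with | false => S1 | true => S2

abbrev hhc : Bool → Bool := fun _ => true

def CMc : Set (Bool × Msg × Bool) :=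
  {(false, 0, true), (false, 1, true), (true, 2, false), (true, 3, false)}

/-- Local connection policy of `h₁`. -/
def K1 : Set (Fin 6 × Act Bool Msg × Fin 6) :=
  {(0, Act.mk false true Dir.out 0, 5), (0, Act.mk true false Dir.inp 2, 1),
   (1, Act.mk false true Dir.out 1, 2), (3, Act.mk true false Dir.inp 3, 4)}

/-- Local connection policy of `h₂`. -/
def K2 : Set (Fin 6 × Act Bool Msg × Fin 6) :=
  {(0, Act.mk false true Dir.inp 0, 1), (0, Act.mk true false Dir.out 3, 2),
   (1, Act.mk true false Dir.out 3, 3), (2, Act.mk false true Dir.inp 0, 3),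
   (3, Act.mk true false Dir.out 2, 4), (4, Act.mk false true Dir.inp 1, 5)}

abbrev Kdc : ∀ b, Set ((Sys b).St (hhc b) × Act Bool Msg × (Sys b).St (hhc b)) :=
  fun b => match b with | false => K1 | true => K2

end CEx
namespace CEx
open CFSM

lemma wf : ∀ b, (Sys b).WellFormed := by
  intro b p t ht
  cases b <;> cases p <;>
    simp only [Sys, S1, S2, dP, dH1, dR, dH2, Set.mem_insert_iff,
      Set.mem_singleton_iff] at ht <;>
    casesm* _ ∨ _ <;> subst_vars <;> exact ⟨rfl, by decide⟩

lemma mixed : ∀ b, ∃ q, MixedSt ((Sys b).delta (hhc b)) q := by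
  intro b
  cases b
  · exact ⟨0, ⟨Act.mk true false Dir.out 2, 1, by simp [dH1], rfl⟩,
      ⟨Act.mk false true Dir.inp 0, 5, by simp [dH1], rfl⟩⟩
  · exact ⟨0, ⟨Act.mk true false Dir.out 0, 1, by simp [dH2], rfl⟩,
      ⟨Act.mk false true Dir.inp 3, 2, by simp [dH2], rfl⟩⟩

lemma connModel : IsConnModel Sys hhc CMc := by
  intro i a
  refine ⟨fun h => ?_, fun h => ?_⟩
  · obtain ⟨q, s, q', hq⟩ := h
    cases i <;> simp [dH1, dH2] at hq <;> casesm* _ ∨ _, _ ∧ _ <;> subst_vars <;>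
      first
        | (refine ⟨true, ?_, ⟨0, false, 1, ?_⟩, ?_⟩ <;> simp [dH1, dH2, CMc]) <;> done
        | (refine ⟨true, ?_, ⟨4, false, 5, ?_⟩, ?_⟩ <;> simp [dH1, dH2, CMc]) <;> done
        | (refine ⟨false, ?_, ⟨0, false, 1, ?_⟩, ?_⟩ <;> simp [dH1, dH2, CMc]) <;> done
        | (refine ⟨false, ?_, ⟨3, false, 4, ?_⟩, ?_⟩ <;> simp [dH1, dH2, CMc]) <;> done
  · obtain ⟨q, r, q', hq⟩ := h
    cases i <;> simp [dH1, dH2] at hq <;> casesm* _ ∨ _, _ ∧ _ <;> subst_vars <;>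
      first
        | (refine ⟨true, ?_, ⟨3, false, 4, ?_⟩, ?_⟩ <;> simp [dH1, dH2, CMc]) <;> done
        | (refine ⟨true, ?_, ⟨0, false, 2, ?_⟩, ?_⟩ <;> simp [dH1, dH2, CMc]) <;> done
        | (refine ⟨false, ?_, ⟨0, false, 5, ?_⟩, ?_⟩ <;> simp [dH1, dH2, CMc]) <;> done
        | (refine ⟨false, ?_, ⟨1, false, 2, ?_⟩, ?_⟩ <;> simp [dH1, dH2, CMc]) <;> done

end CEx
namespace CEx
open CFSM

lemma polsat1 : PolicySat Sys hhc CMc false K1 := by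
  constructor <;> intro q r a q' h <;> simp [dH1] at h <;>
    casesm* _ ∨ _, _ ∧ _ <;> subst_vars <;>
    (refine ⟨true, ?_, ?_, ?_⟩ <;> simp [CMc, K1]) <;> done

lemma polsat2 : PolicySat Sys hhc CMc true K2 := by
  constructor <;> intro q r a q' h <;> simp [dH2] at h <;>
    casesm* _ ∨ _, _ ∧ _ <;> subst_vars <;>
    (refine ⟨false, ?_, ?_, ?_⟩ <;> simp [CMc, K2]) <;> done

lemma connPolicy : IsConnPolicy Sys hhc CMc Kdc := by
  intro b
  cases b
  · refine ⟨polsat1, fun d' hsub hps => Set.Subset.antisymm hsub fun x hx => ?_⟩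
    simp only [K1, Set.mem_insert_iff, Set.mem_singleton_iff] at hx
    rcases hx with rfl | rfl | rfl | rfl
    · obtain ⟨j, hj, -, hd⟩ := hps.1 0 false 0 5 (by simp [dH1])
      cases j
      · exact absurd rfl hj
      · exact hd
    · obtain ⟨j, hj, -, hd⟩ := hps.2 0 false 2 1 (by simp [dH1])
      cases j
      · exact absurd rfl hj
      · exact hd
    · obtain ⟨j, hj, -, hd⟩ := hps.1 1 false 1 2 (by simp [dH1])
      cases j
      · exact absurd rfl hj
      · exact hd
    · obtain ⟨j, hj, -, hd⟩ := hps.2 3 false 3 4 (by simp [dH1])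
      cases j
      · exact absurd rfl hj
      · exact hd
  · refine ⟨polsat2, fun d' hsub hps => Set.Subset.antisymm hsub fun x hx => ?_⟩
    simp only [K2, Set.mem_insert_iff, Set.mem_singleton_iff] at hx
    rcases hx with rfl | rfl | rfl | rfl | rfl | rfl
    · obtain ⟨j, hj, -, hd⟩ := hps.2 0 false 0 1 (by simp [dH2])
      cases j
      · exact hd
      · exact absurd rfl hj
    · obtain ⟨j, hj, -, hd⟩ := hps.1 0 false 3 2 (by simp [dH2])
      cases j
      · exact hd
      · exact absurd rfl hj
    · obtain ⟨j, hj, -, hd⟩ := hps.1 1 false 3 3 (by simp [dH2])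
      cases j
      · exact hd
      · exact absurd rfl hj
    · obtain ⟨j, hj, -, hd⟩ := hps.2 2 false 0 3 (by simp [dH2])
      cases j
      · exact hd
      · exact absurd rfl hj
    · obtain ⟨j, hj, -, hd⟩ := hps.1 3 false 2 4 (by simp [dH2])
      cases j
      · exact hd
      · exact absurd rfl hj
    · obtain ⟨j, hj, -, hd⟩ := hps.2 4 false 1 5 (by simp [dH2])
      cases j
      · exact hd
      · exact absurd rfl hj

end CEx
namespace CEx
open CFSM

lemma rc_inv {P A : Type} (S : CS P A) (Inv : Config S → Prop)
    (h0 : Inv S.initConfig)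
    (hstep : ∀ c c', Inv c → Step S c c' → Inv c') : ∀ c ∈ RC S, Inv c := by
  intro c hc
  induction hc with
  | refl => exact h0
  | tail _ h ih => exact hstep _ _ ih h

/-- Invariant describing the reachable configurations of `S₁`. -/
def Inv1 (c : Config S1) : Prop :=
  c.ch false false = [] ∧ c.ch true true = [] ∧
  ((c.st false = 0 ∧ c.st true = 0 ∧ c.ch false true = [] ∧ c.ch true false = []) ∨
   (c.st false = 0 ∧ c.st true = 1 ∧ c.ch false true = [] ∧ c.ch true false = [2]) ∨
   (c.st false = 1 ∧ c.st true = 0 ∧ c.ch false true = [1] ∧ c.ch true false = []) ∨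
   (c.st false = 1 ∧ c.st true = 1 ∧ c.ch false true = [1] ∧ c.ch true false = [2]) ∨
   (c.st false = 1 ∧ c.st true = 2 ∧ c.ch false true = [] ∧ c.ch true false = [2]) ∨
   (c.st false = 2 ∧ c.st true = 1 ∧ c.ch false true = [1] ∧ c.ch true false = []) ∨
   (c.st false = 2 ∧ c.st true = 2 ∧ c.ch false true = [] ∧ c.ch true false = []))

lemma inv1_step : ∀ c c', Inv1 c → Step S1 c c' → Inv1 c' := by
  rintro c c' ⟨hff, htt, hcases⟩ ⟨⟨ls, lr, ld, lm⟩, hl⟩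
  cases ld <;> cases ls <;> cases lr <;>
    simp only [StepL, S1, dP, dH1, Set.mem_insert_iff, Set.mem_singleton_iff,
      Prod.mk.injEq, Act.mk.injEq, true_and, and_true, false_and, and_false,
      reduceCtorEq, or_false, false_or, ne_eq] at hl
  · -- output by p on channel (false, true)
    obtain ⟨hdel, hst, hch, hfr⟩ := hl
    have eff := hfr false false (by simp)
    have ett := hfr true true (by simp)
    have eo := hfr true false (by simp)
    have hso := hst true (by simp)
    refine ⟨by rw [eff]; exact hff, by rw [ett]; exact htt, ?_⟩
    casesm* _ ∨ _, _ ∧ _ <;> subst_vars <;> simp_all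
  · -- output by h1 on channel (true, false)
    obtain ⟨hdel, hst, hch, hfr⟩ := hl
    have eff := hfr false false (by simp)
    have ett := hfr true true (by simp)
    have eo := hfr false true (by simp)
    have hso := hst false (by simp)
    refine ⟨by rw [eff]; exact hff, by rw [ett]; exact htt, ?_⟩
    casesm* _ ∨ _, _ ∧ _ <;> subst_vars <;> simp_all
  · -- input by h1 on channel (false, true)
    obtain ⟨hdel, hst, hch, hfr⟩ := hl
    have eff := hfr false false (by simp)
    have ett := hfr true true (by simp)
    have eo := hfr true false (by simp)
    have hso := hst false (by simp)
    refine ⟨by rw [eff]; exact hff, by rw [ett]; exact htt, ?_⟩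
    casesm* _ ∨ _, _ ∧ _ <;> subst_vars <;> simp_all
  · -- input by p on channel (true, false)
    obtain ⟨hdel, hst, hch, hfr⟩ := hl
    have eff := hfr false false (by simp)
    have ett := hfr true true (by simp)
    have eo := hfr false true (by simp)
    have hso := hst true (by simp)
    refine ⟨by rw [eff]; exact hff, by rw [ett]; exact htt, ?_⟩
    casesm* _ ∨ _, _ ∧ _ <;> subst_vars <;> simp_all

lemma inv1_rc : ∀ c ∈ RC S1, Inv1 c := by
  refine rc_inv _ _ ?_ inv1_step
  simp [Inv1, CS.initConfig]

end CEx
namespace CEx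
open CFSM

lemma re1 : ReceptionErrorFree S1 := by
  intro c hc h
  obtain ⟨r, ⟨⟨l0, q0', hl0⟩, hrecv⟩, hur⟩ := h
  obtain ⟨hff, htt, hcases⟩ := inv1_rc c hc
  rcases hcases with ⟨h1, h2, h3, h4⟩ | ⟨h1, h2, h3, h4⟩ | ⟨h1, h2, h3, h4⟩ |
    ⟨h1, h2, h3, h4⟩ | ⟨h1, h2, h3, h4⟩ | ⟨h1, h2, h3, h4⟩ | ⟨h1, h2, h3, h4⟩ <;>
  cases r <;>
  first
    | (refine absurd (hrecv (Act.mk false true Dir.out 1) 1 ?_) ?_ <;>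
        simp [S1, dP, h1]) <;> done
    | (refine absurd (hrecv (Act.mk true false Dir.out 2) 1 ?_) ?_ <;>
        simp [S1, dH1, h2]) <;> done
    | (refine (hur true 2 2 ?_).1 ?_ <;> simp [S1, dP, h1, h4]) <;> done
    | (refine (hur false 1 2 ?_).1 ?_ <;> simp [S1, dH1, h2, h3]) <;> done
    | (refine (hur true 2 2 ?_).2 ⟨[], ?_⟩ <;> simp [S1, dP, h1, h4]) <;> done
    | (refine (hur false 1 2 ?_).2 ⟨[], ?_⟩ <;> simp [S1, dH1, h2, h3]) <;> done
    | (simp [S1, dP, dH1, h1, h2] at hl0) <;> done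

end CEx
namespace CEx
open CFSM

/-- Invariant describing the reachable configurations of `S₂`. -/
def Inv2 (c : Config S2) : Prop :=
  c.ch false false = [] ∧ c.ch true true = [] ∧
  ((c.st false = 0 ∧ c.st true = 0 ∧ c.ch false true = [] ∧ c.ch true false = []) ∨
   (c.st false = 0 ∧ c.st true = 1 ∧ c.ch false true = [] ∧ c.ch true false = [0]) ∨
   (c.st false = 1 ∧ c.st true = 0 ∧ c.ch false true = [3] ∧ c.ch true false = []) ∨
   (c.st false = 1 ∧ c.st true = 1 ∧ c.ch false true = [3] ∧ c.ch true false = [0]) ∨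
   (c.st false = 1 ∧ c.st true = 2 ∧ c.ch false true = [] ∧ c.ch true false = []) ∨
   (c.st false = 1 ∧ c.st true = 3 ∧ c.ch false true = [] ∧ c.ch true false = [0]) ∨
   (c.st false = 2 ∧ c.st true = 1 ∧ c.ch false true = [3] ∧ c.ch true false = []) ∨
   (c.st false = 2 ∧ c.st true = 3 ∧ c.ch false true = [] ∧ c.ch true false = []) ∨
   (c.st false = 3 ∧ c.st true = 1 ∧ c.ch false true = [3, 2] ∧ c.ch true false = []) ∨
   (c.st false = 3 ∧ c.st true = 3 ∧ c.ch false true = [2] ∧ c.ch true false = []) ∨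
   (c.st false = 3 ∧ c.st true = 4 ∧ c.ch false true = [] ∧ c.ch true false = []) ∨
   (c.st false = 3 ∧ c.st true = 5 ∧ c.ch false true = [] ∧ c.ch true false = [1]) ∨
   (c.st false = 4 ∧ c.st true = 5 ∧ c.ch false true = [] ∧ c.ch true false = []))

set_option maxHeartbeats 2000000 in
lemma inv2_step : ∀ c c', Inv2 c → Step S2 c c' → Inv2 c' := by
  rintro c c' ⟨hff, htt, hcases⟩ ⟨⟨ls, lr, ld, lm⟩, hl⟩
  cases ld <;> cases ls <;> cases lr <;>
    simp only [StepL, S2, dR, dH2, Set.mem_insert_iff, Set.mem_singleton_iff,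
      Prod.mk.injEq, Act.mk.injEq, true_and, and_true, false_and, and_false,
      reduceCtorEq, or_false, false_or, ne_eq] at hl
  · obtain ⟨hdel, hst, hch, hfr⟩ := hl
    have eff := hfr false false (by simp)
    have ett := hfr true true (by simp)
    have eo := hfr true false (by simp)
    have hso := hst true (by simp)
    refine ⟨by rw [eff]; exact hff, by rw [ett]; exact htt, ?_⟩
    casesm* _ ∨ _, _ ∧ _ <;> subst_vars <;> simp_all
  · obtain ⟨hdel, hst, hch, hfr⟩ := hl
    have eff := hfr false false (by simp)
    have ett := hfr true true (by simp)
    have eo := hfr false true (by simp)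
    have hso := hst false (by simp)
    refine ⟨by rw [eff]; exact hff, by rw [ett]; exact htt, ?_⟩
    casesm* _ ∨ _, _ ∧ _ <;> subst_vars <;> simp_all
  · obtain ⟨hdel, hst, hch, hfr⟩ := hl
    have eff := hfr false false (by simp)
    have ett := hfr true true (by simp)
    have eo := hfr true false (by simp)
    have hso := hst false (by simp)
    refine ⟨by rw [eff]; exact hff, by rw [ett]; exact htt, ?_⟩
    casesm* _ ∨ _, _ ∧ _ <;> subst_vars <;> simp_all
  · obtain ⟨hdel, hst, hch, hfr⟩ := hl
    have eff := hfr false false (by simp)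
    have ett := hfr true true (by simp)
    have eo := hfr false true (by simp)
    have hso := hst true (by simp)
    refine ⟨by rw [eff]; exact hff, by rw [ett]; exact htt, ?_⟩
    casesm* _ ∨ _, _ ∧ _ <;> subst_vars <;> simp_all

lemma inv2_rc : ∀ c ∈ RC S2, Inv2 c := by
  refine rc_inv _ _ ?_ inv2_step
  simp [Inv2, CS.initConfig]

set_option maxHeartbeats 2000000 in
lemma re2 : ReceptionErrorFree S2 := by
  intro c hc h
  obtain ⟨r, ⟨⟨l0, q0', hl0⟩, hrecv⟩, hur⟩ := h
  obtain ⟨hff, htt, hcases⟩ := inv2_rc c hc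
  rcases hcases with ⟨h1, h2, h3, h4⟩ | ⟨h1, h2, h3, h4⟩ | ⟨h1, h2, h3, h4⟩ |
    ⟨h1, h2, h3, h4⟩ | ⟨h1, h2, h3, h4⟩ | ⟨h1, h2, h3, h4⟩ | ⟨h1, h2, h3, h4⟩ |
    ⟨h1, h2, h3, h4⟩ | ⟨h1, h2, h3, h4⟩ | ⟨h1, h2, h3, h4⟩ | ⟨h1, h2, h3, h4⟩ |
    ⟨h1, h2, h3, h4⟩ | ⟨h1, h2, h3, h4⟩ <;>
  cases r <;>
  first
    | (refine absurd (hrecv (Act.mk false true Dir.out 3) 1 ?_) ?_ <;>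
        simp [S2, dR, h1]) <;> done
    | (refine absurd (hrecv (Act.mk false true Dir.out 2) 3 ?_) ?_ <;>
        simp [S2, dR, h1]) <;> done
    | (refine absurd (hrecv (Act.mk true false Dir.out 0) 1 ?_) ?_ <;>
        simp [S2, dH2, h2]) <;> done
    | (refine absurd (hrecv (Act.mk true false Dir.out 0) 3 ?_) ?_ <;>
        simp [S2, dH2, h2]) <;> done
    | (refine absurd (hrecv (Act.mk true false Dir.out 1) 5 ?_) ?_ <;>
        simp [S2, dH2, h2]) <;> done
    | (refine (hur true 0 2 ?_).1 ?_ <;> simp [S2, dR, h1, h4]) <;> done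
    | (refine (hur true 0 2 ?_).2 ⟨[], ?_⟩ <;> simp [S2, dR, h1, h4]) <;> done
    | (refine (hur true 1 4 ?_).1 ?_ <;> simp [S2, dR, h1, h4]) <;> done
    | (refine (hur true 1 4 ?_).2 ⟨[], ?_⟩ <;> simp [S2, dR, h1, h4]) <;> done
    | (refine (hur false 3 3 ?_).1 ?_ <;> simp [S2, dH2, h2, h3]) <;> done
    | (refine (hur false 3 3 ?_).2 ⟨[], ?_⟩ <;> simp [S2, dH2, h2, h3]) <;> done
    | (refine (hur false 3 3 ?_).2 ⟨[2], ?_⟩ <;> simp [S2, dH2, h2, h3]) <;> done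
    | (refine (hur false 2 4 ?_).1 ?_ <;> simp [S2, dH2, h2, h3]) <;> done
    | (refine (hur false 2 4 ?_).2 ⟨[], ?_⟩ <;> simp [S2, dH2, h2, h3]) <;> done
    | (simp [S2, dR, dH2, h1, h2] at hl0) <;> done

end CEx
namespace CEx
open CFSM

abbrev KS : CS Bool Msg := policyCS Sys hhc Kdc

/-- The local states of `K`, with type forced to `Fin 6`. -/
def stKF (c : Config KS) : Fin 6 := c.st false
def stKT (c : Config KS) : Fin 6 := c.st true

/-- Invariant describing the reachable configurations of the connection policy `K`. -/
def InvK (c : Config KS) : Prop :=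
  c.ch false false = [] ∧ c.ch true true = [] ∧
  ((stKF c = 0 ∧ stKT c = 0 ∧ c.ch false true = [] ∧ c.ch true false = []) ∨
   (stKF c = 0 ∧ stKT c = 2 ∧ c.ch false true = [] ∧ c.ch true false = [3]) ∨
   (stKF c = 5 ∧ stKT c = 0 ∧ c.ch false true = [0] ∧ c.ch true false = []) ∨
   (stKF c = 5 ∧ stKT c = 1 ∧ c.ch false true = [] ∧ c.ch true false = []) ∨
   (stKF c = 5 ∧ stKT c = 2 ∧ c.ch false true = [0] ∧ c.ch true false = [3]) ∨
   (stKF c = 5 ∧ stKT c = 3 ∧ c.ch false true = [] ∧ c.ch true false = [3]) ∨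
   (stKF c = 5 ∧ stKT c = 4 ∧ c.ch false true = [] ∧ c.ch true false = [3, 2]))

lemma memK1 (q q' : KS.St false) (l : Act Bool Msg) : (q, l, q') ∈ KS.delta false ↔
    (@Eq (Fin 6) q 0 ∧ l = Act.mk false true Dir.out 0 ∧ @Eq (Fin 6) q' 5) ∨
    (@Eq (Fin 6) q 0 ∧ l = Act.mk true false Dir.inp 2 ∧ @Eq (Fin 6) q' 1) ∨
    (@Eq (Fin 6) q 1 ∧ l = Act.mk false true Dir.out 1 ∧ @Eq (Fin 6) q' 2) ∨
    (@Eq (Fin 6) q 3 ∧ l = Act.mk true false Dir.inp 3 ∧ @Eq (Fin 6) q' 4) := by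
  constructor
  · rintro (h|h|h|h)
    · injection h with h1 h'; injection h' with h2 h3; exact Or.inl (⟨h1, h2, h3⟩)
    · injection h with h1 h'; injection h' with h2 h3; exact Or.inr (Or.inl (⟨h1, h2, h3⟩))
    · injection h with h1 h'; injection h' with h2 h3; exact Or.inr (Or.inr (Or.inl (⟨h1, h2, h3⟩)))
    · injection h with h1 h'; injection h' with h2 h3; exact Or.inr (Or.inr (Or.inr (⟨h1, h2, h3⟩)))
  · rintro (⟨h1, h2, h3⟩|⟨h1, h2, h3⟩|⟨h1, h2, h3⟩|⟨h1, h2, h3⟩)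
    · exact Or.inl (Prod.ext h1 (Prod.ext h2 h3))
    · exact Or.inr (Or.inl (Prod.ext h1 (Prod.ext h2 h3)))
    · exact Or.inr (Or.inr (Or.inl (Prod.ext h1 (Prod.ext h2 h3))))
    · exact Or.inr (Or.inr (Or.inr (Prod.ext h1 (Prod.ext h2 h3))))

lemma memK2 (q q' : KS.St true) (l : Act Bool Msg) : (q, l, q') ∈ KS.delta true ↔
    (@Eq (Fin 6) q 0 ∧ l = Act.mk false true Dir.inp 0 ∧ @Eq (Fin 6) q' 1) ∨
    (@Eq (Fin 6) q 0 ∧ l = Act.mk true false Dir.out 3 ∧ @Eq (Fin 6) q' 2) ∨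
    (@Eq (Fin 6) q 1 ∧ l = Act.mk true false Dir.out 3 ∧ @Eq (Fin 6) q' 3) ∨
    (@Eq (Fin 6) q 2 ∧ l = Act.mk false true Dir.inp 0 ∧ @Eq (Fin 6) q' 3) ∨
    (@Eq (Fin 6) q 3 ∧ l = Act.mk true false Dir.out 2 ∧ @Eq (Fin 6) q' 4) ∨
    (@Eq (Fin 6) q 4 ∧ l = Act.mk false true Dir.inp 1 ∧ @Eq (Fin 6) q' 5) := by
  constructor
  · rintro (h|h|h|h|h|h)
    · injection h with h1 h'; injection h' with h2 h3; exact Or.inl (⟨h1, h2, h3⟩)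
    · injection h with h1 h'; injection h' with h2 h3; exact Or.inr (Or.inl (⟨h1, h2, h3⟩))
    · injection h with h1 h'; injection h' with h2 h3; exact Or.inr (Or.inr (Or.inl (⟨h1, h2, h3⟩)))
    · injection h with h1 h'; injection h' with h2 h3; exact Or.inr (Or.inr (Or.inr (Or.inl (⟨h1, h2, h3⟩))))
    · injection h with h1 h'; injection h' with h2 h3; exact Or.inr (Or.inr (Or.inr (Or.inr (Or.inl (⟨h1, h2, h3⟩)))))
    · injection h with h1 h'; injection h' with h2 h3; exact Or.inr (Or.inr (Or.inr (Or.inr (Or.inr (⟨h1, h2, h3⟩)))))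
  · rintro (⟨h1, h2, h3⟩|⟨h1, h2, h3⟩|⟨h1, h2, h3⟩|⟨h1, h2, h3⟩|⟨h1, h2, h3⟩|⟨h1, h2, h3⟩)
    · exact Or.inl (Prod.ext h1 (Prod.ext h2 h3))
    · exact Or.inr (Or.inl (Prod.ext h1 (Prod.ext h2 h3)))
    · exact Or.inr (Or.inr (Or.inl (Prod.ext h1 (Prod.ext h2 h3))))
    · exact Or.inr (Or.inr (Or.inr (Or.inl (Prod.ext h1 (Prod.ext h2 h3)))))
    · exact Or.inr (Or.inr (Or.inr (Or.inr (Or.inl (Prod.ext h1 (Prod.ext h2 h3))))))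
    · exact Or.inr (Or.inr (Or.inr (Or.inr (Or.inr (Prod.ext h1 (Prod.ext h2 h3))))))

set_option maxHeartbeats 2000000 in
lemma invK_step : ∀ c c', InvK c → Step KS c c' → InvK c' := by
  rintro c c' ⟨hff, htt, hcases⟩ ⟨⟨ls, lr, ld, lm⟩, hl⟩
  simp only [stKF, stKT] at hcases
  cases ld <;> cases ls <;> cases lr <;>
    simp only [StepL, memK1, memK2, K1, K2, Set.mem_insert_iff, Set.mem_singleton_iff,
      Prod.mk.injEq, Act.mk.injEq, true_and, and_true, false_and, and_false,
      reduceCtorEq, or_false, false_or, ne_eq] at hl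
  · obtain ⟨hdel, hst, hch, hfr⟩ := hl
    have eff := hfr false false (by simp)
    have ett := hfr true true (by simp)
    have eo := hfr true false (by simp)
    have hso := hst true (by simp)
    refine ⟨by rw [eff]; exact hff, by rw [ett]; exact htt, ?_⟩
    casesm* _ ∨ _, _ ∧ _ <;> subst_vars <;> simp_all [stKF, stKT]
  · obtain ⟨hdel, hst, hch, hfr⟩ := hl
    have eff := hfr false false (by simp)
    have ett := hfr true true (by simp)
    have eo := hfr false true (by simp)
    have hso := hst false (by simp)
    refine ⟨by rw [eff]; exact hff, by rw [ett]; exact htt, ?_⟩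
    casesm* _ ∨ _, _ ∧ _ <;> subst_vars <;> simp_all [stKF, stKT]
  · obtain ⟨hdel, hst, hch, hfr⟩ := hl
    have eff := hfr false false (by simp)
    have ett := hfr true true (by simp)
    have eo := hfr true false (by simp)
    have hso := hst false (by simp)
    refine ⟨by rw [eff]; exact hff, by rw [ett]; exact htt, ?_⟩
    casesm* _ ∨ _, _ ∧ _ <;> subst_vars <;> simp_all [stKF, stKT]
  · obtain ⟨hdel, hst, hch, hfr⟩ := hl
    have eff := hfr false false (by simp)
    have ett := hfr true true (by simp)
    have eo := hfr false true (by simp)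
    have hso := hst true (by simp)
    refine ⟨by rw [eff]; exact hff, by rw [ett]; exact htt, ?_⟩
    casesm* _ ∨ _, _ ∧ _ <;> subst_vars <;> simp_all [stKF, stKT]

lemma invK_rc : ∀ c ∈ RC KS, InvK c := by
  refine rc_inv _ _ ?_ invK_step
  simp [InvK, stKF, stKT, CS.initConfig, KS, policyCS]

set_option maxHeartbeats 2000000 in
lemma reK : ReceptionErrorFree KS := by
  intro c hc h
  obtain ⟨r, ⟨⟨l0, q0', hl0⟩, hrecv⟩, hur⟩ := h
  obtain ⟨hff, htt, hcases⟩ := invK_rc c hc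
  rcases hcases with ⟨h1, h2, h3, h4⟩ | ⟨h1, h2, h3, h4⟩ | ⟨h1, h2, h3, h4⟩ |
    ⟨h1, h2, h3, h4⟩ | ⟨h1, h2, h3, h4⟩ | ⟨h1, h2, h3, h4⟩ | ⟨h1, h2, h3, h4⟩ <;>
  simp only [stKF, stKT] at h1 h2 <;>
  cases r <;>
  first
    | (refine absurd (hrecv (Act.mk false true Dir.out 0) (5 : Fin 6) ((memK1 _ _ _).mpr ?_)) ?_ <;>
        simp [↓memK1, ↓memK2, K1, h1]) <;> done
    | (refine absurd (hrecv (Act.mk true false Dir.out 3) (2 : Fin 6) ((memK2 _ _ _).mpr ?_)) ?_ <;>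
        simp [↓memK1, ↓memK2, K2, h2]) <;> done
    | (refine absurd (hrecv (Act.mk true false Dir.out 3) (3 : Fin 6) ((memK2 _ _ _).mpr ?_)) ?_ <;>
        simp [↓memK1, ↓memK2, K2, h2]) <;> done
    | (refine absurd (hrecv (Act.mk true false Dir.out 2) (4 : Fin 6) ((memK2 _ _ _).mpr ?_)) ?_ <;>
        simp [↓memK1, ↓memK2, K2, h2]) <;> done
    | (refine (hur false 0 (3 : Fin 6) ((memK2 _ _ _).mpr ?_)).1 ?_ <;> simp [↓memK1, ↓memK2, K2, h2, h3]) <;> done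
    | (refine (hur false 0 (3 : Fin 6) ((memK2 _ _ _).mpr ?_)).2 ⟨[], ?_⟩ <;> simp [↓memK1, ↓memK2, K2, h2, h3]) <;> done
    | (refine (hur false 1 (5 : Fin 6) ((memK2 _ _ _).mpr ?_)).1 ?_ <;> simp [↓memK1, ↓memK2, K2, h2, h3]) <;> done
    | (simp [↓memK1, ↓memK2, K1, K2, h1, h2] at hl0) <;> done

end CEx
namespace CEx
open CFSM

theorem mem_mpr {A B L : Type} (e : B = A) (E : Set (B × L × B) = Set (A × L × A))
    (s : Set (A × L × A)) (x : B × L × B) :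
    x ∈ Eq.mpr E s ↔ (cast e x.1, x.2.1, cast e x.2.2) ∈ s := by
  subst e
  rfl

theorem cast_mpr {A B : Type} (e : A = B) (E : A = B) (v : B) :
    cast e (Eq.mpr E v) = v := by
  subst e
  rfl

/-- Membership in the transition relation of a gateway machine of `MC`. -/
lemma mem_delta_gw (i : Bool) (q q' : MCSt Sys hhc ⟨i, true⟩) (l) :
    ((q, l, q') ∈ (MC Sys hhc Kdc).delta ⟨i, true⟩) ↔
      (toGW Sys hhc i q, l, toGW Sys hhc i q') ∈ GWdelta Sys hhc Kdc i := by
  simp only [MC, toGW]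
  rw [dif_pos trivial]
  exact mem_mpr (by simp [MCSt]) _ _ _

/-- Membership in the transition relation of a non-interface machine of `MC`. -/
lemma mem_delta_loc (i : Bool) (hp : (false : Bool) ≠ hhc i)
    (q q' : MCSt Sys hhc ⟨i, false⟩) (l) :
    ((q, l, q') ∈ (MC Sys hhc Kdc).delta ⟨i, false⟩) ↔
      ∃ q0 l0 q0', (q0, l0, q0') ∈ (Sys i).delta false ∧
        (toLoc Sys hhc hp q, l, toLoc Sys hhc hp q') = (q0, liftAct i l0, q0') := by
  simp only [MC, toLoc]
  rw [dif_neg (by simp [hhc])]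
  exact mem_mpr (by simp [MCSt, hhc]) _ _ _

lemma toGW_init (i : Bool) :
    toGW Sys hhc i ((MC Sys hhc Kdc).initConfig.st ⟨i, true⟩) =
      Sum.inl ((Sys i).init (hhc i)) := by
  simp only [CS.initConfig, MC, toGW]
  rw [dif_pos trivial]
  exact cast_mpr _ _ _

lemma toLoc_init (i : Bool) (hp : (false : Bool) ≠ hhc i) :
    toLoc Sys hhc hp ((MC Sys hhc Kdc).initConfig.st ⟨i, false⟩) = (Sys i).init false := by
  simp only [CS.initConfig, MC, toLoc]
  rw [dif_neg (by simp [hhc])]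
  exact cast_mpr _ _ _

end CEx
namespace CEx
open CFSM

noncomputable def castGW (i : Bool) (g : GWState Sys hhc i) : MCSt Sys hhc ⟨i, true⟩ :=
  cast (show MCSt Sys hhc ⟨i, true⟩ = GWState Sys hhc i by simp [MCSt]).symm g

noncomputable def castLoc (i : Bool) (v : (Sys i).St false) : MCSt Sys hhc ⟨i, false⟩ :=
  cast (show MCSt Sys hhc ⟨i, false⟩ = (Sys i).St false by simp [MCSt, hhc]).symm v

lemma toGW_castGW (i : Bool) (g : GWState Sys hhc i) : toGW Sys hhc i (castGW i g) = g := by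
  simp [toGW, castGW]

lemma toLoc_castLoc (i : Bool) (v : (Sys i).St false) :
    toLoc Sys hhc (by simp [hhc]) (castLoc i v) = v := by
  simp [toLoc, castLoc]

lemma castGW_toGW (i : Bool) (x : MCSt Sys hhc ⟨i, true⟩) : castGW i (toGW Sys hhc i x) = x := by
  simp [toGW, castGW]

lemma castLoc_toLoc (i : Bool) (x : MCSt Sys hhc ⟨i, false⟩) :
    castLoc i (toLoc Sys hhc (by simp [hhc]) x) = x := by
  simp [toLoc, castLoc]

/-- Build a state assignment of the multicomposition. -/
noncomputable def cSt (gf : GWState Sys hhc false) (gt : GWState Sys hhc true)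
    (pf : (Sys false).St false) (pr : (Sys true).St false) :
    ∀ x, MCSt Sys hhc x := fun x =>
  match x with
  | ⟨false, false⟩ => castLoc false pf
  | ⟨false, true⟩ => castGW false gf
  | ⟨true, false⟩ => castLoc true pr
  | ⟨true, true⟩ => castGW true gt

lemma initConfig_eq :
    (MC Sys hhc Kdc).initConfig
      = ⟨cSt (Sum.inl 0) (Sum.inl 0) 0 0, fun _ _ => []⟩ := by
  have hst : (MC Sys hhc Kdc).initConfig.st = cSt (Sum.inl 0) (Sum.inl 0) 0 0 := by
    funext x
    obtain ⟨i, p⟩ := x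
    cases p
    · have h1 := toLoc_init i (by simp [hhc])
      have h2 := toLoc_castLoc i ((Sys i).init false)
      cases i <;>
        exact (cast_inj _).mp (h1.trans h2.symm)
    · have h1 := toGW_init i
      have h2 := toGW_castGW i (Sum.inl ((Sys i).init true))
      cases i <;>
        exact (cast_inj _).mp (h1.trans h2.symm)
  exact congrArg (fun s => (⟨s, fun _ _ => []⟩ : Config (MC Sys hhc Kdc))) hst

end CEx
namespace CEx
open CFSM

noncomputable abbrev MCc : CS ((_ : Bool) × Bool) Msg := MC Sys hhc Kdc

abbrev pF : (_ : Bool) × Bool := ⟨false, false⟩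
abbrev gF : (_ : Bool) × Bool := ⟨false, true⟩
abbrev pT : (_ : Bool) × Bool := ⟨true, false⟩
abbrev gT : (_ : Bool) × Bool := ⟨true, true⟩

noncomputable def cfg0 : Config MCc := ⟨cSt (Sum.inl 0) (Sum.inl 0) 0 0, fun _ _ => []⟩

noncomputable def cfg1 : Config MCc :=
  ⟨cSt (Sum.inl 0) (Sum.inl 0) 1 0,
   fun x y => match x, y with
     | ⟨false, false⟩, ⟨false, true⟩ => [1]
     | _, _ => []⟩

noncomputable def cfg2 : Config MCc :=
  ⟨cSt (Sum.inl 0) (Sum.inl 0) 1 1,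
   fun x y => match x, y with
     | ⟨false, false⟩, ⟨false, true⟩ => [1]
     | ⟨true, false⟩, ⟨true, true⟩ => [3]
     | _, _ => []⟩

noncomputable def cfg3 : Config MCc :=
  ⟨cSt (Sum.inl 0) (Sum.inr (0, Act.mk false true Dir.inp 3, 2)) 1 1,
   fun x y => match x, y with
     | ⟨false, false⟩, ⟨false, true⟩ => [1]
     | _, _ => []⟩

noncomputable def cfg4 : Config MCc :=
  ⟨cSt (Sum.inl 0) (Sum.inl 2) 1 1,
   fun x y => match x, y with
     | ⟨false, false⟩, ⟨false, true⟩ => [1]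
     | ⟨true, true⟩, ⟨false, true⟩ => [3]
     | _, _ => []⟩

lemma step01 : Step MCc cfg0 cfg1 := by
  refine ⟨Act.mk pF gF Dir.out 1, ?_, ?_, ?_, ?_⟩
  · exact (mem_delta_loc false (by simp [hhc]) _ _ _).mpr
      ⟨0, Act.mk false true Dir.out 1, 1, by simp [dP],
        by simp [cfg0, cfg1, cSt, toLoc_castLoc, liftAct]⟩
  · rintro ⟨i, j⟩ hp
    cases i <;> cases j <;> simp_all [cfg0, cfg1, cSt] <;> rfl
  · rfl
  · rintro ⟨i, j⟩ ⟨i', j'⟩ hp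
    cases i <;> cases j <;> cases i' <;> cases j' <;> simp_all [cfg0, cfg1]

lemma step12 : Step MCc cfg1 cfg2 := by
  refine ⟨Act.mk pT gT Dir.out 3, ?_, ?_, ?_, ?_⟩
  · exact (mem_delta_loc true (by simp [hhc]) _ _ _).mpr
      ⟨0, Act.mk false true Dir.out 3, 1, by simp [dR],
        by simp [cfg1, cfg2, cSt, toLoc_castLoc, liftAct]⟩
  · rintro ⟨i, j⟩ hp
    cases i <;> cases j <;> simp_all [cfg1, cfg2, cSt] <;> rfl
  · rfl
  · rintro ⟨i, j⟩ ⟨i', j'⟩ hp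
    cases i <;> cases j <;> cases i' <;> cases j' <;> simp_all [cfg1, cfg2]

lemma step23 : Step MCc cfg2 cfg3 := by
  refine ⟨Act.mk pT gT Dir.inp 3, ?_, ?_, ?_, ?_⟩
  · refine (mem_delta_gw true _ _ _).mpr ?_
    simp only [cfg2, cfg3, cSt, toGW_castGW]
    exact ⟨0, 3, 2, Or.inr ⟨false, false, by simp [dH2], by simp [Kdc, K2], Or.inl rfl⟩⟩
  · rintro ⟨i, j⟩ hp
    cases i <;> cases j <;> simp_all [cfg2, cfg3, cSt] <;> rfl
  · rfl
  · rintro ⟨i, j⟩ ⟨i', j'⟩ hp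
    cases i <;> cases j <;> cases i' <;> cases j' <;> simp_all [cfg2, cfg3]

lemma step34 : Step MCc cfg3 cfg4 := by
  refine ⟨Act.mk gT gF Dir.out 3, ?_, ?_, ?_, ?_⟩
  · refine (mem_delta_gw true _ _ _).mpr ?_
    simp only [cfg3, cfg4, cSt, toGW_castGW]
    exact ⟨0, 3, 2, Or.inr ⟨false, false, by simp [dH2], by simp [Kdc, K2], Or.inr rfl⟩⟩
  · rintro ⟨i, j⟩ hp
    cases i <;> cases j <;> simp_all [cfg3, cfg4, cSt] <;> rfl
  · rfl
  · rintro ⟨i, j⟩ ⟨i', j'⟩ hp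
    cases i <;> cases j <;> cases i' <;> cases j' <;> simp_all [cfg3, cfg4]

lemma cfg4_rc : cfg4 ∈ RC MCc := by
  have h0 : (MC Sys hhc Kdc).initConfig = cfg0 := initConfig_eq
  show Reach MCc MCc.initConfig cfg4
  rw [show MCc.initConfig = cfg0 from h0]
  exact .head step01 (.head step12 (.head step23 (.head step34 .refl)))

end CEx
namespace CEx
open CFSM

lemma cfg4_ur : URConfig MCc cfg4 := by
  refine ⟨gF, ⟨⟨Act.mk gT gF Dir.inp 2,
      castGW false (Sum.inr (0, Act.mk true false Dir.out 2, 1)), ?_⟩, ?_⟩, ?_⟩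
  · refine (mem_delta_gw false _ _ _).mpr ?_
    simp only [cfg4, cSt, toGW_castGW]
    exact ⟨0, 2, 1, Or.inl ⟨false, true, by simp [dH1], by simp [Kdc, K1], Or.inl rfl⟩⟩
  · intro l q' h
    replace h := (mem_delta_gw false _ _ _).mp h
    simp only [cfg4, cSt, toGW_castGW] at h
    obtain ⟨q, a, q0', hc⟩ := h
    rcases hc with ⟨s, r, hd, hk, hx | hx⟩ | ⟨s, r, hd, hk, hx | hx⟩ <;>
      simp only [Prod.mk.injEq] at hx <;>
      first
        | (obtain ⟨-, hl, -⟩ := hx; subst hl; rfl)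
        | (exact absurd hx.1 (by simp))
  · intro s a q' h
    replace h := (mem_delta_gw false _ _ _).mp h
    simp only [cfg4, cSt, toGW_castGW] at h
    obtain ⟨q, a0, q0', hc⟩ := h
    rcases hc with ⟨s0, r0, hd, hk, hx | hx⟩ | ⟨s0, r0, hd, hk, hx | hx⟩ <;>
      simp only [Prod.mk.injEq, Sum.inl.injEq, Act.mk.injEq] at hx <;>
      [skip; exact absurd hx.1 (by simp); skip; exact absurd hx.1 (by simp)] <;>
      obtain ⟨hq, ⟨hs, -, -, ha⟩, -⟩ := hx <;>
      subst hq <;> subst ha <;> subst hs <;>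
      simp_all [dH1, Kdc, K1, cfg4, hhc]
end CEx
open CFSM in
/-- the no-mixed-state assumption cannot be dropped for
reception-error-freeness preservation. -/
theorem receptionErrorFree_not_preserved_with_mixed_states :
    ∃ (P : Bool → Type) (A : Type) (S : ∀ b, CS (P b) A) (hh : ∀ b, P b)
      (CM : Set (Bool × A × Bool))
      (Kd : ∀ b, Set ((S b).St (hh b) × Act Bool A × (S b).St (hh b))),
      (∀ b, Finite (P b)) ∧ Finite A ∧ (∀ b p, Finite ((S b).St p)) ∧
      (∀ b, (S b).WellFormed) ∧
      (∀ b, ∃ q, MixedSt ((S b).delta (hh b)) q) ∧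
      IsConnModel S hh CM ∧
      IsConnPolicy S hh CM Kd ∧
      (∀ b, ReceptionErrorFree (S b)) ∧
      ReceptionErrorFree (policyCS S hh Kd) ∧
      (∃ s ∈ RC (MC S hh Kd), URConfig (MC S hh Kd) s) ∧
      ¬ ReceptionErrorFree (MC S hh Kd) := by
  refine ⟨fun _ => Bool, CEx.Msg, CEx.Sys, CEx.hhc, CEx.CMc, CEx.Kdc,
    fun _ => inferInstance, inferInstance, ?_, CEx.wf, CEx.mixed, CEx.connModel,
    CEx.connPolicy, ?_, CEx.reK,
    ⟨CEx.cfg4, CEx.cfg4_rc, CEx.cfg4_ur⟩,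
    fun hre => hre CEx.cfg4 CEx.cfg4_rc CEx.cfg4_ur⟩
  · intro b p
    cases b <;> cases p <;> exact inferInstanceAs (Finite (Fin 6))
  · intro b
    cases b
    · exact CEx.re1
    · exact CEx.re2
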